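/- There exists a constant C > 0 such that for every n ≥ 2 and every initial Grundy coloring of the path graph on n vertices, the expected number of iterations of ILS with Kempe chains until the current coloring is a proper 2-coloring is at most C·n. -/

import Mathlib

set_option linter.unusedSectionVars false

open scoped ENNReal

attribute [local instance] Classical.propDecidable

noncomputable section

namespace DGC

/-! ### Markov chains and expected hitting times -/

/-- `survive K A t s` is the probability that the Markov chain with transition kernel `K`,
started at `s`, has not visited the set `A` within its first `t` steps
(time `0` counts: if `s ∈ A` the chain has hit `A` at time `0`). -/
def survive {S : Type*} (K : S → PMF S) (A : Set S) : ℕ → S → ℝ≥0∞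
  | 0, s => if s ∈ A then 0 else 1
  | (t + 1), s => if s ∈ A then 0 else ∑' s', K s s' * survive K A t s'

/-- The expected hitting time of the set `A` for the Markov chain with kernel `K`
started at `s`; it equals `∑_{t ≥ 0} Pr[T > t]` where `T = min {t : X_t ∈ A}`, and it is `∞`
if `A` is reached with probability less than one. -/
def expectedHitting {S : Type*} (K : S → PMF S) (A : Set S) (s : S) : ℝ≥0∞ :=
  ∑' t, survive K A t s

/-- `log⁺ T = max {1, ln T}`. -/
def logPlus (T : ℕ) : ℝ := max 1 (Real.log T)

variable {V : Type*} [Fintype V] [DecidableEq V]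

/-! ### Colorings, conflicts -/

/-- A coloring (a map `V → ℕ`, colors being `1,2,3,…`) is proper if no edge is monochromatic. -/
def IsProper (G : SimpleGraph V) (c : V → ℕ) : Prop :=
  ∀ u v, G.Adj u v → c u ≠ c v

/-- The set of conflicting edges of the coloring `c`. -/
def conflictSet (G : SimpleGraph V) (c : V → ℕ) : Set (Sym2 V) :=
  {e | e ∈ G.edgeSet ∧ ∃ u v, e = s(u, v) ∧ c u = c v}

/-- The number of conflicting edges of the coloring `c`. -/
def numConflicts (G : SimpleGraph V) (c : V → ℕ) : ℕ :=
  (conflictSet G c).ncard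

/-- The set of proper 2-colorings (with color set `{1,2}`). -/
def properTwoColorings (G : SimpleGraph V) : Set (V → ℕ) :=
  {c | IsProper G c ∧ ∀ v, c v = 1 ∨ c v = 2}

/-- Vertices that are an endpoint of some conflicting edge. -/
def conflictVerts (G : SimpleGraph V) (c : V → ℕ) : Finset V :=
  Finset.univ.filter fun v => ∃ u, G.Adj v u ∧ c v = c u

/-! ### RLS and the (1+1) EA with `k = 2` colors (palette `{1,2}`) -/

/-- Recolor vertex `v` with the unique other color of the palette `{1,2}`. -/
def flip (c : V → ℕ) (v : V) : V → ℕ := Function.update c v (3 - c v)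

/-- One iteration of RLS with `k = 2` colors: choose a vertex `v` uniformly at random,
recolor it with the other color, and accept iff the number of conflicting edges
does not increase. -/
def rls2 (G : SimpleGraph V) (c : V → ℕ) : PMF (V → ℕ) :=
  if h : Nonempty V then
    (@PMF.uniformOfFintype V _ h).map fun v =>
      if numConflicts G (flip c v) ≤ numConflicts G c then flip c v else c
  else PMF.pure c

/-- `PMF.bernoulli` as it was defined in the older Mathlib (with an `ℝ≥0∞` parameter). -/
def bernoulliENN (p : ℝ≥0∞) (h : p ≤ 1) : PMF Bool :=
  PMF.ofFintype (fun b => cond b p (1 - p)) (by simp [add_tsub_cancel_of_le h])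

/-- Independent Bernoulli choices along a list of vertices. -/
def flipsAux (p : V → ℝ≥0∞) (h : ∀ v, p v ≤ 1) : List V → PMF (V → Bool)
  | [] => PMF.pure fun _ => false
  | v :: vs =>
      (bernoulliENN (p v) (h v)).bind fun b =>
        (flipsAux p h vs).map fun g => Function.update g v b

/-- A random subset of the vertices (as an indicator function), where each vertex `v` is
included independently with probability `p v`. -/
def flips (p : V → ℝ≥0∞) (h : ∀ v, p v ≤ 1) : PMF (V → Bool) :=
  flipsAux p h Finset.univ.toList

/-- `1/|V|` (or `0` for the empty graph). -/
def invCard (V : Type*) [Fintype V] : ℝ≥0∞ :=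
  if 0 < Fintype.card V then (Fintype.card V : ℝ≥0∞)⁻¹ else 0

lemma invCard_le_one : invCard V ≤ 1 := by
  unfold invCard
  split
  · rw [ENNReal.inv_le_one]
    exact_mod_cast ‹0 < Fintype.card V›
  · exact zero_le_one

lemma half_le_one : (1 / 2 : ℝ≥0∞) ≤ 1 := by
  rw [ENNReal.div_le_iff (by norm_num) (by norm_num)]
  norm_num

/-- Recolor (within the palette `{1,2}`) exactly the vertices selected by `bs`. -/
def mutate2 (c : V → ℕ) (bs : V → Bool) : V → ℕ := fun v => if bs v then 3 - c v else c v

/-- One iteration of the (1+1) EA with `k = 2` colors: every vertex is independently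
recolored with probability `1/n`, and the offspring is accepted iff its number of
conflicting edges is not larger. -/
def ea2 (G : SimpleGraph V) (c : V → ℕ) : PMF (V → ℕ) :=
  (flips (fun _ => invCard V) (fun _ => invCard_le_one)).map fun bs =>
    if numConflicts G (mutate2 c bs) ≤ numConflicts G c then mutate2 c bs else c

/-- One iteration of the tailored (1+1) EA with `k = 2` colors: every endpoint of a
conflicting edge is independently recolored with probability `1/2`, every other vertex with
probability `1/n`; the offspring is accepted iff its number of conflicting edges is
not larger. -/
def tailoredEA2 (G : SimpleGraph V) (c : V → ℕ) : PMF (V → ℕ) :=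
  (flips (fun v => if v ∈ conflictVerts G c then 1 / 2 else invCard V)
      (fun v => by split; exacts [half_le_one, invCard_le_one])).map fun bs =>
    if numConflicts G (mutate2 c bs) ≤ numConflicts G c then mutate2 c bs else c

/-- One iteration of the tailored RLS with `k = 2` colors: with probability `1/2` a vertex is
chosen uniformly at random among the endpoints of conflicting edges (if any exist), otherwise
uniformly at random among all vertices; it is recolored with the other color, and the move
is accepted iff the number of conflicting edges does not increase. -/
def tailoredRls2 (G : SimpleGraph V) (c : V → ℕ) : PMF (V → ℕ) :=
  if hV : Nonempty V then
    (bernoulliENN (1 / 2) half_le_one).bind fun coin =>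
      (if h : coin = true ∧ (conflictVerts G c).Nonempty
        then PMF.uniformOfFinset (conflictVerts G c) h.2
        else @PMF.uniformOfFintype V _ hV).map fun v =>
        if numConflicts G (flip c v) ≤ numConflicts G c then flip c v else c
  else PMF.pure c

/-! ### Grundy colorings and Grundy local search -/

/-- The smallest color (from `{1,2,3,…}`) not used by any neighbor of `v`. -/
def smallestFree (G : SimpleGraph V) (c : V → ℕ) (v : V) : ℕ :=
  sInf {i | 1 ≤ i ∧ ∀ u, G.Adj v u → c u ≠ i}

/-- A coloring is a Grundy coloring iff every vertex has the smallest color not used by any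
of its neighbors (equivalently: it is proper, and every vertex `v` has, for every color
`i < c v`, an `i`-colored neighbor). -/
def IsGrundy (G : SimpleGraph V) (c : V → ℕ) : Prop :=
  ∀ v, c v = smallestFree G c v

/-- One step of Grundy local search: some vertex whose color is not the smallest color absent
from its neighborhood is recolored with the smallest color not used by any of its neighbors. -/
def glsStep (G : SimpleGraph V) (c c' : V → ℕ) : Prop :=
  ∃ v, c v ≠ smallestFree G c v ∧ c' = Function.update c v (smallestFree G c v)

/-- `glsRun G c c'` holds iff `c'` is a possible outcome of a (maximal) run of Grundy local
search started at `c`: it is reachable from `c` by Grundy local search steps and is a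
Grundy coloring. -/
def glsRun (G : SimpleGraph V) (c c' : V → ℕ) : Prop :=
  Relation.ReflTransGen (glsStep G) c c' ∧ IsGrundy G c'

/-- The Grundy number of `G`: the largest color used by any Grundy coloring of `G`. -/
def grundyNumber (G : SimpleGraph V) : ℕ :=
  sSup {k | ∃ c v, IsGrundy G c ∧ c v = k}

/-! ### Kempe chains, color eliminations, and iterated local search -/

/-- The restriction of `G` to the vertex set `S` (an induced subgraph on the same
vertex type). -/
def restrict (G : SimpleGraph V) (S : Set V) : SimpleGraph V where
  Adj u w := G.Adj u w ∧ u ∈ S ∧ w ∈ S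
  symm := by constructor; intro u w h; exact ⟨h.1.symm, h.2.2, h.2.1⟩
  loopless := by constructor; intro u h; exact G.irrefl h.1

/-- `H_j(v)`: the connected component containing `v` of the subgraph of `G` induced by the
vertices colored `c v` or `j`. -/
def kempeSet (G : SimpleGraph V) (c : V → ℕ) (v : V) (j : ℕ) : Set V :=
  {u | (restrict G {w | c w = c v ∨ c w = j}).Reachable v u}

/-- The Kempe chain operation `(v, j)`: swap the colors `c v` and `j` on all vertices of
`H_j(v)`. -/
def kempeSwap (G : SimpleGraph V) (c : V → ℕ) (v : V) (j : ℕ) : V → ℕ := fun u =>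
  if u ∈ kempeSet G c v j then
    if c u = c v then j else if c u = j then c v else c u
  else c u

/-- The union `H_j(v₁) ∪ … ∪ H_j(v_ℓ)` over all `i`-colored neighbors `v₁, …, v_ℓ` of `v`. -/
def ceSet (G : SimpleGraph V) (c : V → ℕ) (v : V) (i j : ℕ) : Set V :=
  {u | ∃ w, G.Adj v w ∧ c w = i ∧ (restrict G {x | c x = i ∨ c x = j}).Reachable w u}

/-- The color elimination at `v` with colors `i, j`: swap colors `i` and `j` on
`H_j(v₁) ∪ … ∪ H_j(v_ℓ)`, where `v₁, …, v_ℓ` are the `i`-colored neighbors of `v`. -/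
def ceSwap (G : SimpleGraph V) (c : V → ℕ) (v : V) (i j : ℕ) : V → ℕ := fun u =>
  if u ∈ ceSet G c v i j then
    if c u = i then j else if c u = j then i else c u
  else c u

/-- `n_i(c)`: the number of `i`-colored vertices of the coloring `c`. -/
def colorCount (c : V → ℕ) (i : ℕ) : ℕ := (Finset.univ.filter fun v => c v = i).card

/-- The selection order `x ⪰ y`: `x` has fewer conflicting edges than `y`, or equally many
and the color frequencies satisfy `n_i(x) = n_i(y)` for all `i`, or `n_i(x) < n_i(y)` for the
largest index `i` with `n_i(x) ≠ n_i(y)`. -/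
def Pref (G : SimpleGraph V) (x y : V → ℕ) : Prop :=
  numConflicts G x < numConflicts G y ∨
    (numConflicts G x = numConflicts G y ∧
      ((∀ i, colorCount x i = colorCount y i) ∨
        ∃ i, colorCount x i < colorCount y i ∧ ∀ k, i < k → colorCount x k = colorCount y k))

/-- One iteration of ILS with Kempe chains, where `gls` is the (arbitrary, but fixed) rule
producing the outcome of a run of Grundy local search: choose `v` uniformly at random and
`j ∈ {1, …, deg(v) + 1}` uniformly at random, apply the Kempe chain operation `(v, j)`,
apply Grundy local search, and accept the result `z` iff `z ⪰ x`. -/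
def ilsKempe (G : SimpleGraph V) (gls : (V → ℕ) → (V → ℕ)) (x : V → ℕ) :
    PMF (V → ℕ) :=
  if hV : Nonempty V then
    (@PMF.uniformOfFintype V _ hV).bind fun v =>
      (PMF.uniformOfFinset (Finset.Icc 1 (G.degree v + 1))
          ⟨1, by simp only [Finset.mem_Icc]; omega⟩).map fun j =>
        let z := gls (kempeSwap G x v j)
        if Pref G z x then z else x
  else PMF.pure x

/-- The pairs of distinct colors `i ≠ j` with `i, j ∈ {1, …, c v − 1}`. -/
def cePairs (x : V → ℕ) (v : V) : Finset (ℕ × ℕ) :=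
  ((Finset.Icc 1 (x v - 1)) ×ˢ (Finset.Icc 1 (x v - 1))).filter fun p => p.1 ≠ p.2

lemma cePairs_nonempty {x : V → ℕ} {v : V} (h : 3 ≤ x v) : (cePairs x v).Nonempty :=
  ⟨(1, 2), by simp only [cePairs, Finset.mem_filter, Finset.mem_product, Finset.mem_Icc]; omega⟩

/-- One iteration of ILS with color eliminations, where `gls` is the (arbitrary, but fixed)
rule producing the outcome of a run of Grundy local search: choose `v` uniformly at random;
if `c v ≥ 3`, choose distinct `i, j ∈ {1, …, c v − 1}` uniformly at random and apply the
corresponding color elimination; apply Grundy local search, and accept the result `z`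
iff `z ⪰ x`. -/
def ilsCE (G : SimpleGraph V) (gls : (V → ℕ) → (V → ℕ)) (x : V → ℕ) :
    PMF (V → ℕ) :=
  if hV : Nonempty V then
    (@PMF.uniformOfFintype V _ hV).bind fun v =>
      if h : 3 ≤ x v then
        (PMF.uniformOfFinset (cePairs x v) (cePairs_nonempty h)).map fun p =>
          let z := gls (ceSwap G x v p.1 p.2)
          if Pref G z x then z else x
      else PMF.pure x
  else PMF.pure x


/-! ### Auxiliary: expectation and drift -/

section prob
variable {S : Type*}

/-- expected value of φ under a PMF -/
def ev (p : PMF S) (φ : S → ℝ≥0∞) : ℝ≥0∞ := ∑' s, p s * φ s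

lemma ev_bind {T : Type*} (p : PMF T) (q : T → PMF S) (φ : S → ℝ≥0∞) :
    ev (p.bind q) φ = ∑' a, p a * ev (q a) φ := by
  unfold ev
  simp only [PMF.bind_apply]
  have h1 : ∀ s, (∑' a, p a * q a s) * φ s = ∑' a, p a * q a s * φ s := by
    intro s; rw [ENNReal.tsum_mul_right]
  simp only [h1]
  rw [ENNReal.tsum_comm]
  congr 1; ext a
  simp only [mul_assoc]
  rw [ENNReal.tsum_mul_left]

lemma ev_pure (a : S) (φ : S → ℝ≥0∞) : ev (PMF.pure a) φ = φ a := by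
  unfold ev
  simp only [PMF.pure_apply]
  rw [tsum_eq_single a (by intro b hb; simp [hb])]
  simp

lemma ev_map {T : Type*} (p : PMF T) (f : T → S) (φ : S → ℝ≥0∞) :
    ev (p.map f) φ = ∑' a, p a * φ (f a) := by
  rw [PMF.map, ev_bind]
  simp [ev_pure]

lemma ev_uniformOfFinset (s : Finset S) (hs : s.Nonempty) (φ : S → ℝ≥0∞) :
    ev (PMF.uniformOfFinset s hs) φ = ∑ a ∈ s, (s.card : ℝ≥0∞)⁻¹ * φ a := by
  unfold ev
  rw [tsum_eq_sum (s := s) (by intro b hb; simp [PMF.uniformOfFinset_apply, hb])]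
  apply Finset.sum_congr rfl
  intro a ha; simp [PMF.uniformOfFinset_apply, ha]

lemma ev_uniformOfFintype [Fintype S] [hS : Nonempty S] (φ : S → ℝ≥0∞) :
    ev (PMF.uniformOfFintype S) φ = ∑ a : S, (Fintype.card S : ℝ≥0∞)⁻¹ * φ a := by
  unfold ev
  rw [tsum_fintype]
  apply Finset.sum_congr rfl
  intro a _; simp [PMF.uniformOfFintype_apply]

lemma drift (K : S → PMF S) (A : Set S) (S0 : Set S)
    (hclosed : ∀ s ∈ S0, ∀ s', K s s' ≠ 0 → s' ∈ S0)
    (φ : S → ℝ≥0∞) (δ : ℝ≥0∞) (hδ0 : δ ≠ 0) (hδtop : δ ≠ ⊤)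
    (hdrift : ∀ s ∈ S0, s ∉ A → ev (K s) φ + δ ≤ φ s)
    {s : S} (hs : s ∈ S0) :
    expectedHitting K A s ≤ φ s / δ := by
  have key : ∀ t, ∀ s ∈ S0, ∑ u ∈ Finset.range (t+1), survive K A u s ≤ φ s / δ := by
    intro t
    induction t with
    | zero =>
      intro s hs
      simp only [zero_add, Finset.range_one, Finset.sum_singleton]
      by_cases hA : s ∈ A
      · simp [survive, hA]
      · have h1 : survive K A 0 s = 1 := by unfold survive; rw [if_neg hA]
        rw [h1]
        have hδle : δ ≤ φ s := le_trans (le_add_self) (hdrift s hs hA)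
        rw [ENNReal.le_div_iff_mul_le (Or.inl hδ0) (Or.inl hδtop), one_mul]
        exact hδle
    | succ t ih =>
      intro s hs
      by_cases hA : s ∈ A
      · have : ∀ u, survive K A u s = 0 := by
          intro u; cases u <;> simp [survive, hA]
        simp [this]
      · rw [Finset.sum_range_succ'] -- sum_{i<t+2} f i = sum_{i<t+1} f (i+1) + f 0
        simp only [survive, hA, if_false]
        have swap : ∑ u ∈ Finset.range (t+1), ∑' s', K s s' * survive K A u s'
            = ∑' s', K s s' * ∑ u ∈ Finset.range (t+1), survive K A u s' := by
          rw [← Summable.tsum_finsetSum (fun i _ => ENNReal.summable)]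
          congr 1; ext s'; rw [Finset.mul_sum]
        rw [swap]
        have hb : ∑' s', K s s' * ∑ u ∈ Finset.range (t+1), survive K A u s'
            ≤ ∑' s', K s s' * (φ s' / δ) := by
          apply ENNReal.tsum_le_tsum
          intro s'
          by_cases h0 : K s s' = 0
          · simp [h0]
          · exact mul_le_mul_right (ih s' (hclosed s hs s' h0)) _
        have hb2 : ∑' s', K s s' * (φ s' / δ) = (ev (K s) φ) / δ := by
          unfold ev
          rw [ENNReal.div_eq_inv_mul]
          rw [← ENNReal.tsum_mul_left]
          congr 1; ext s'
          rw [ENNReal.div_eq_inv_mul]; ring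
        calc ∑' s', K s s' * ∑ u ∈ Finset.range (t+1), survive K A u s' + 1
            ≤ ev (K s) φ / δ + 1 := by
              exact add_le_add_left (le_trans hb (le_of_eq hb2)) 1
          _ = (ev (K s) φ + δ) / δ := by
              rw [ENNReal.add_div, ENNReal.div_self hδ0 hδtop]
          _ ≤ φ s / δ := ENNReal.div_le_div_right (hdrift s hs hA) δ
  unfold expectedHitting
  rw [ENNReal.tsum_eq_iSup_sum]
  apply iSup_le
  intro F
  by_cases hF : F.Nonempty
  · calc ∑ u ∈ F, survive K A u s
        ≤ ∑ u ∈ Finset.range ((F.max' hF)+1), survive K A u s := by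
          apply Finset.sum_le_sum_of_subset
          intro u hu
          simp only [Finset.mem_range]
          exact Nat.lt_succ_of_le (Finset.le_max' F u hu)
      _ ≤ φ s / δ := key _ s hs
  · rw [Finset.not_nonempty_iff_eq_empty] at hF
    simp [hF]

end prob

/-! ### Grundy basics -/

section grundyBasics
variable {V : Type*} [Fintype V] [DecidableEq V] (G : SimpleGraph V) (c : V → ℕ) (v : V)

lemma sfSet_nonempty : {i | 1 ≤ i ∧ ∀ u, G.Adj v u → c u ≠ i}.Nonempty := by
  refine ⟨1 + Finset.univ.sup c, ?_, ?_⟩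
  · omega
  · intro u _
    have := Finset.le_sup (f := c) (Finset.mem_univ u)
    omega

lemma sf_mem : smallestFree G c v ∈ {i | 1 ≤ i ∧ ∀ u, G.Adj v u → c u ≠ i} :=
  Nat.sInf_mem (sfSet_nonempty G c v)

lemma one_le_sf : 1 ≤ smallestFree G c v := (sf_mem G c v).1

lemma sf_ne {u : V} (hadj : G.Adj v u) : c u ≠ smallestFree G c v :=
  (sf_mem G c v).2 u hadj

lemma sf_exists_below {i : ℕ} (h1 : 1 ≤ i) (h2 : i < smallestFree G c v) :
    ∃ u, G.Adj v u ∧ c u = i := by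
  by_contra h
  push_neg at h
  have hi : i ∈ {i | 1 ≤ i ∧ ∀ u, G.Adj v u → c u ≠ i} := ⟨h1, fun u hu => h u hu⟩
  have := Nat.sInf_le hi
  unfold smallestFree at h2
  omega

lemma sf_le {i : ℕ} (h1 : 1 ≤ i) (h2 : ∀ u, G.Adj v u → c u ≠ i) :
    smallestFree G c v ≤ i :=
  Nat.sInf_le ⟨h1, h2⟩

lemma sf_congr (c' : V → ℕ) (h : ∀ u, G.Adj v u → c u = c' u) :
    smallestFree G c v = smallestFree G c' v := by
  unfold smallestFree
  congr 1
  ext i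
  constructor
  · rintro ⟨h1, h2⟩; exact ⟨h1, fun u hu => (h u hu) ▸ h2 u hu⟩
  · rintro ⟨h1, h2⟩; exact ⟨h1, fun u hu => (h u hu).symm ▸ h2 u hu⟩

lemma sf_eq_one (h : ∀ u, G.Adj v u → c u ≠ 1) : smallestFree G c v = 1 :=
  le_antisymm (sf_le G c v le_rfl h) (one_le_sf G c v)

lemma sf_eq_two (h1 : ∃ u, G.Adj v u ∧ c u = 1) (h2 : ∀ u, G.Adj v u → c u ≠ 2) :
    smallestFree G c v = 2 := by
  have hle : smallestFree G c v ≤ 2 := sf_le G c v (by omega) h2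
  have hge : 1 ≤ smallestFree G c v := one_le_sf G c v
  obtain ⟨u, hu, hcu⟩ := h1
  have := sf_ne G c v hu
  omega

lemma sf_eq_three (h1 : ∃ u, G.Adj v u ∧ c u = 1) (h2 : ∃ u, G.Adj v u ∧ c u = 2)
    (h3 : ∀ u, G.Adj v u → c u ≠ 3) : smallestFree G c v = 3 := by
  have hle : smallestFree G c v ≤ 3 := sf_le G c v (by omega) h3
  have hge : 1 ≤ smallestFree G c v := one_le_sf G c v
  obtain ⟨u, hu, hcu⟩ := h1
  obtain ⟨u', hu', hcu'⟩ := h2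
  have := sf_ne G c v hu
  have := sf_ne G c v hu'
  omega

variable {G c v}

lemma grundy_proper (hx : IsGrundy G c) : IsProper G c := by
  intro u w h he
  exact sf_ne G c u h (he ▸ (hx u).symm ▸ rfl)

lemma grundy_pos (hx : IsGrundy G c) (v : V) : 1 ≤ c v := by
  rw [hx v]; exact one_le_sf G c v

end grundyBasics



/-! ### Path graph basics -/

section pathBasics
open SimpleGraph
variable {n : ℕ}

lemma path_two_nbrs {v a b d : Fin n} (h1 : (pathGraph n).Adj v a)
    (h2 : (pathGraph n).Adj v b) (h3 : (pathGraph n).Adj v d) :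
    a = b ∨ a = d ∨ b = d := by
  rw [pathGraph_adj] at h1 h2 h3
  have : a.val = b.val ∨ a.val = d.val ∨ b.val = d.val := by omega
  rcases this with h | h | h
  · exact Or.inl (Fin.ext h)
  · exact Or.inr (Or.inl (Fin.ext h))
  · exact Or.inr (Or.inr (Fin.ext h))

lemma path_exists_nbr (hn : 2 ≤ n) (v : Fin n) : ∃ u, (pathGraph n).Adj v u := by
  by_cases h : v.val + 1 < n
  · exact ⟨⟨v.val + 1, h⟩, by rw [pathGraph_adj]; left; rfl⟩
  · refine ⟨⟨v.val - 1, by omega⟩, ?_⟩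
    rw [pathGraph_adj]
    right
    simp only []
    omega

lemma path_grundy_le_three (hx : IsGrundy (pathGraph n) c) (v : Fin n) : c v ≤ 3 := by
  by_contra h
  push_neg at h
  have hsf : 4 ≤ smallestFree (pathGraph n) c v := by rw [← hx v]; omega
  obtain ⟨u1, ha1, hc1⟩ := sf_exists_below (pathGraph n) c v (i := 1) (by omega) (by omega)
  obtain ⟨u2, ha2, hc2⟩ := sf_exists_below (pathGraph n) c v (i := 2) (by omega) (by omega)
  obtain ⟨u3, ha3, hc3⟩ := sf_exists_below (pathGraph n) c v (i := 3) (by omega) (by omega)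
  rcases path_two_nbrs ha1 ha2 ha3 with h | h | h <;> (subst h; omega)

lemma path_three_struct (hx : IsGrundy (pathGraph n) c) {t : Fin n} (ht : c t = 3) :
    ∃ u1 u2, (pathGraph n).Adj t u1 ∧ (pathGraph n).Adj t u2 ∧ c u1 = 1 ∧ c u2 = 2 ∧
      u1 ≠ u2 ∧ (∀ u, (pathGraph n).Adj t u → u = u1 ∨ u = u2) := by
  have hsf : smallestFree (pathGraph n) c t = 3 := by rw [← hx t, ht]
  obtain ⟨u1, ha1, hc1⟩ := sf_exists_below (pathGraph n) c t (i := 1) (by omega) (by omega)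
  obtain ⟨u2, ha2, hc2⟩ := sf_exists_below (pathGraph n) c t (i := 2) (by omega) (by omega)
  have hne : u1 ≠ u2 := fun h => by rw [h] at hc1; omega
  refine ⟨u1, u2, ha1, ha2, hc1, hc2, hne, ?_⟩
  intro u hu
  rcases path_two_nbrs hu ha1 ha2 with h | h | h
  · exact Or.inl h
  · exact Or.inr h
  · exact absurd h hne

/-- walks in a restriction cannot jump over a vertex outside the restriction set -/
lemma path_walk_lt {S : Set (Fin n)} {t : Fin n} (ht : t ∉ S) :
    ∀ {a b : Fin n}, (restrict (pathGraph n) S).Walk a b → a.val < t.val → b.val < t.val := by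
  intro a b w
  induction w with
  | nil => exact fun h => h
  | @cons a e b h p ih =>
    intro ha
    apply ih
    obtain ⟨hadj, _, heS⟩ := h
    rw [pathGraph_adj] at hadj
    have hne : e ≠ t := fun hh => ht (hh ▸ heS)
    have : e.val ≠ t.val := fun hh => hne (Fin.ext hh)
    omega

lemma path_walk_gt {S : Set (Fin n)} {t : Fin n} (ht : t ∉ S) :
    ∀ {a b : Fin n}, (restrict (pathGraph n) S).Walk a b → t.val < a.val → t.val < b.val := by
  intro a b w
  induction w with
  | nil => exact fun h => h
  | @cons a e b h p ih =>
    intro ha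
    apply ih
    obtain ⟨hadj, _, heS⟩ := h
    rw [pathGraph_adj] at hadj
    have hne : e ≠ t := fun hh => ht (hh ▸ heS)
    have : e.val ≠ t.val := fun hh => hne (Fin.ext hh)
    omega

lemma restrict_reachable_mem {S : Set (Fin n)} {a b : Fin n}
    (h : (restrict (pathGraph n) S).Reachable a b) : b = a ∨ b ∈ S := by
  obtain ⟨w⟩ := h
  induction w with
  | nil => exact Or.inl rfl
  | @cons a e b h p ih =>
    rcases ih with h' | h'
    · exact Or.inr (h' ▸ h.2.2)
    · exact Or.inr h'

end pathBasics



/-! ### The Kempe chain move at a good vertex -/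

section kempe
open SimpleGraph
variable {n : ℕ}

def Bset (x : Fin n → ℕ) (v : Fin n) : Set (Fin n) :=
  {u | (restrict (pathGraph n) {w | x w ≠ 3}).Reachable v u}

def Tset (x : Fin n → ℕ) (v : Fin n) : Set (Fin n) :=
  {t | x t = 3 ∧ ∃ w, (pathGraph n).Adj t w ∧ w ∈ Bset x v}

def cS (x : Fin n → ℕ) (v : Fin n) (S : Set (Fin n)) : Fin n → ℕ :=
  fun w => if w ∈ S then smallestFree (pathGraph n) (kempeSwap (pathGraph n) x v (3 - x v)) w
    else kempeSwap (pathGraph n) x v (3 - x v) w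

variable {x : Fin n → ℕ} {v : Fin n}

lemma mem_B_ne3 (hv : x v ≠ 3) {u : Fin n} (hu : u ∈ Bset x v) : x u ≠ 3 := by
  rcases restrict_reachable_mem hu with h | h
  · exact h ▸ hv
  · exact h

lemma v_mem_B : v ∈ Bset x v := Reachable.refl v

lemma B_closed (hv : x v ≠ 3) {u w : Fin n} (hu : u ∈ Bset x v)
    (hadj : (pathGraph n).Adj u w) (hw : x w ≠ 3) : w ∈ Bset x v :=
  Reachable.trans hu (SimpleGraph.Adj.reachable ⟨hadj, mem_B_ne3 hv hu, hw⟩)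

lemma B_nbr (hv : x v ≠ 3) {u : Fin n} (hu : (pathGraph n).Adj v u) (hu3 : x u ≠ 3)
    {w : Fin n} (hw : w ∈ Bset x v) : ∃ u', u' ∈ Bset x v ∧ (pathGraph n).Adj w u' := by
  have key : ∀ (a b : Fin n), (restrict (pathGraph n) {w | x w ≠ 3}).Walk a b →
      a ∈ Bset x v → (b = a ∨ ∃ u', u' ∈ Bset x v ∧ (pathGraph n).Adj b u') := by
    intro a b p
    induction p with
    | nil => exact fun _ => Or.inl rfl
    | @cons a e b h q ih =>
      intro ha
      have he : e ∈ Bset x v := Reachable.trans ha (SimpleGraph.Adj.reachable h)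
      rcases ih he with h' | h'
      · exact Or.inr ⟨a, ha, h' ▸ h.1.symm⟩
      · exact Or.inr h'
  obtain ⟨p⟩ := hw
  rcases key v w p v_mem_B with h | h
  · exact ⟨u, B_closed hv v_mem_B hu hu3, h ▸ hu⟩
  · exact h

lemma kempeSet_eq (hx : IsGrundy (pathGraph n) x) (hv : x v ≠ 3) :
    kempeSet (pathGraph n) x v (3 - x v) = Bset x v := by
  unfold kempeSet Bset
  have hset : {w | x w = x v ∨ x w = 3 - x v} = {w | x w ≠ 3} := by
    ext w
    have h1 := grundy_pos hx w
    have h2 := path_grundy_le_three hx w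
    have h3 := grundy_pos hx v
    have h4 := path_grundy_le_three hx v
    simp only [Set.mem_setOf_eq]
    omega
  rw [hset]

lemma c'_in (hx : IsGrundy (pathGraph n) x) (hv : x v ≠ 3) {u : Fin n} (hu : u ∈ Bset x v) :
    kempeSwap (pathGraph n) x v (3 - x v) u = 3 - x u := by
  unfold kempeSwap
  rw [kempeSet_eq hx hv]
  rw [if_pos hu]
  have h1 := grundy_pos hx u
  have h2 := path_grundy_le_three hx u
  have h3 := grundy_pos hx v
  have h4 := path_grundy_le_three hx v
  have h5 := mem_B_ne3 hv hu
  split_ifs <;> omega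

lemma c'_out (hx : IsGrundy (pathGraph n) x) (hv : x v ≠ 3) {u : Fin n} (hu : u ∉ Bset x v) :
    kempeSwap (pathGraph n) x v (3 - x v) u = x u := by
  unfold kempeSwap
  rw [kempeSet_eq hx hv]
  rw [if_neg hu]

lemma c'_proper (hx : IsGrundy (pathGraph n) x) (hv : x v ≠ 3) :
    IsProper (pathGraph n) (kempeSwap (pathGraph n) x v (3 - x v)) := by
  intro a b hadj
  have hprop := grundy_proper hx a b hadj
  have h1 := grundy_pos hx a
  have h2 := path_grundy_le_three hx a
  have h3 := grundy_pos hx b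
  have h4 := path_grundy_le_three hx b
  by_cases ha : a ∈ Bset x v <;> by_cases hb : b ∈ Bset x v
  · rw [c'_in hx hv ha, c'_in hx hv hb]
    have := mem_B_ne3 hv ha; have := mem_B_ne3 hv hb
    omega
  · rw [c'_in hx hv ha, c'_out hx hv hb]
    have hb3 : x b = 3 := by
      by_contra h
      exact hb (B_closed hv ha hadj h)
    have := mem_B_ne3 hv ha
    omega
  · rw [c'_out hx hv ha, c'_in hx hv hb]
    have ha3 : x a = 3 := by
      by_contra h
      exact ha (B_closed hv hb hadj.symm h)
    have := mem_B_ne3 hv hb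
    omega
  · rw [c'_out hx hv ha, c'_out hx hv hb]
    exact hprop


lemma T_struct (hx : IsGrundy (pathGraph n) x) (hv : x v ≠ 3) {t : Fin n}
    (ht : t ∈ Tset x v) :
    ∃ m, (m = 1 ∨ m = 2) ∧
      (∀ u, (pathGraph n).Adj t u → kempeSwap (pathGraph n) x v (3 - x v) u = m) ∧
      smallestFree (pathGraph n) (kempeSwap (pathGraph n) x v (3 - x v)) t = 3 - m := by
  obtain ⟨ht3, w, hadjw, hwB⟩ := ht
  obtain ⟨u1, u2, ha1, ha2, hc1, hc2, hne, hall⟩ := path_three_struct hx ht3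
  -- not both u1 u2 in B
  have hnotboth : ¬(u1 ∈ Bset x v ∧ u2 ∈ Bset x v) := by
    rintro ⟨hb1, hb2⟩
    have htS : t ∉ {w : Fin n | x w ≠ 3} := by simp [ht3]
    have hvt : v ≠ t := fun h => hv (h ▸ ht3)
    have hvalne : v.val ≠ t.val := fun h => hvt (Fin.ext h)
    have hu1 := (pathGraph_adj).mp ha1
    have hu2 := (pathGraph_adj).mp ha2
    have hvalu : u1.val ≠ u2.val := fun h => hne (Fin.ext h)
    obtain ⟨p1⟩ := hb1
    obtain ⟨p2⟩ := hb2
    rcases lt_or_gt_of_ne hvalne with hlt | hgt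
    · have := path_walk_lt htS p1 hlt
      have := path_walk_lt htS p2 hlt
      omega
    · have := path_walk_gt htS p1 hgt
      have := path_walk_gt htS p2 hgt
      omega
  -- the in-B one and out-B one
  have hw12 : w = u1 ∨ w = u2 := hall w hadjw
  have hkey : ∃ uin uout, (pathGraph n).Adj t uin ∧ (pathGraph n).Adj t uout ∧
      uin ∈ Bset x v ∧ uout ∉ Bset x v ∧ x uin + x uout = 3 ∧
      (∀ u, (pathGraph n).Adj t u → u = uin ∨ u = uout) := by
    rcases hw12 with h | h
    · refine ⟨u1, u2, ha1, ha2, h ▸ hwB, fun hb => hnotboth ⟨h ▸ hwB, hb⟩, by omega, hall⟩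
    · refine ⟨u2, u1, ha2, ha1, h ▸ hwB, fun hb => hnotboth ⟨hb, h ▸ hwB⟩, by omega, ?_⟩
      intro u hu
      exact (hall u hu).symm
  obtain ⟨uin, uout, hain, haout, hinB, houtB, hsum, hall'⟩ := hkey
  have hiv := c'_in hx hv hinB
  have hov := c'_out hx hv houtB
  have h1 := grundy_pos hx uin
  have h2 := path_grundy_le_three hx uin
  have h1' := grundy_pos hx uout
  have h2' := path_grundy_le_three hx uout
  refine ⟨x uout, by omega, ?_, ?_⟩
  · intro u hu
    rcases hall' u hu with h | h
    · rw [h, hiv]; omega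
    · rw [h, hov]
  · -- smallestFree c' t = 3 - x uout
    have hnbr : ∀ u, (pathGraph n).Adj t u →
        kempeSwap (pathGraph n) x v (3 - x v) u = x uout := by
      intro u hu
      rcases hall' u hu with h | h
      · rw [h, hiv]; omega
      · rw [h, hov]
    rcases (by omega : x uout = 1 ∨ x uout = 2) with h | h
    · rw [h]
      refine sf_eq_two _ _ _ ⟨uin, hain, ?_⟩ ?_
      · rw [hnbr uin hain, h]
      · intro u hu; rw [hnbr u hu, h]; omega
    · rw [h]
      rw [show (3:ℕ) - 2 = 1 from rfl]
      refine sf_eq_one _ _ _ ?_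
      intro u hu; rw [hnbr u hu, h]; omega


lemma cS_mem (S : Set (Fin n)) {u : Fin n} (hu : u ∈ S) :
    cS x v S u = smallestFree (pathGraph n) (kempeSwap (pathGraph n) x v (3 - x v)) u :=
  if_pos hu

lemma cS_not_mem (S : Set (Fin n)) {u : Fin n} (hu : u ∉ S) :
    cS x v S u = kempeSwap (pathGraph n) x v (3 - x v) u :=
  if_neg hu

lemma cS_sf_off (hx : IsGrundy (pathGraph n) x) (hv : x v ≠ 3)
    {u0 : Fin n} (hu0 : (pathGraph n).Adj v u0) (hu03 : x u0 ≠ 3) {S : Set (Fin n)}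
    (hS : S ⊆ Tset x v) {w : Fin n} (hw : w ∉ Tset x v \ S) :
    cS x v S w = smallestFree (pathGraph n) (cS x v S) w := by
  by_cases hwS : w ∈ S
  · -- w ∈ S : recolored vertex, its neighbors are unchanged
    have hwT := hS hwS
    have hnb : ∀ u, (pathGraph n).Adj w u → cS x v S u = kempeSwap (pathGraph n) x v (3 - x v) u := by
      intro u hu
      apply cS_not_mem
      intro huS
      have hu3 : x u = 3 := ((hS huS)).1
      exact grundy_proper hx w u hu (hwT.1.trans hu3.symm)
    rw [cS_mem S hwS]
    rw [← sf_congr (pathGraph n) (cS x v S) w (kempeSwap (pathGraph n) x v (3 - x v)) hnb]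
  · by_cases hw3 : x w = 3
    · -- w is a 3-vertex not adjacent to B: untouched
      have hwT : w ∉ Tset x v := fun h => hw ⟨h, hwS⟩
      have hwB : w ∉ Bset x v := fun h => mem_B_ne3 hv h hw3
      have hnb : ∀ u, (pathGraph n).Adj w u → cS x v S u = x u := by
        intro u hu
        have hu3 : x u ≠ 3 := fun h => grundy_proper hx w u hu (hw3.trans h.symm)
        have huB : u ∉ Bset x v := fun h => hwT ⟨hw3, u, hu, h⟩
        have huS : u ∉ S := fun h => hu3 ((hS h)).1
        rw [cS_not_mem S huS, c'_out hx hv huB]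
      rw [cS_not_mem S hwS, c'_out hx hv hwB]
      have hsfc : smallestFree (pathGraph n) (cS x v S) w = smallestFree (pathGraph n) x w :=
        sf_congr (pathGraph n) (cS x v S) w x hnb
      rw [hsfc, ← hx w]
    · -- w colored 1 or 2
      have hwT : w ∉ Tset x v := fun h => hw3 h.1
      have hcw : cS x v S w = kempeSwap (pathGraph n) x v (3 - x v) w := cS_not_mem S hwS
      have h1 := grundy_pos hx w
      have h2 := path_grundy_le_three hx w
      have he12 : 1 ≤ kempeSwap (pathGraph n) x v (3 - x v) w ∧
          kempeSwap (pathGraph n) x v (3 - x v) w ≤ 2 := by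
        by_cases hwB : w ∈ Bset x v
        · rw [c'_in hx hv hwB]; omega
        · rw [c'_out hx hv hwB]; omega
      set e := kempeSwap (pathGraph n) x v (3 - x v) w with he
      -- (i) no neighbor of w has cS-color e
      have hno : ∀ u, (pathGraph n).Adj w u → cS x v S u ≠ e := by
        intro u hu
        by_cases huS : u ∈ S
        · obtain ⟨m, hm12, hmnbr, hmsf⟩ := T_struct hx hv (hS huS)
          have hme : m = e := by rw [← hmnbr w hu.symm]
          rw [cS_mem S huS, hmsf, hme]
          omega
        · rw [cS_not_mem S huS]
          by_cases hu3 : x u = 3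
          · have huB : u ∉ Bset x v := fun h => mem_B_ne3 hv h hu3
            rw [c'_out hx hv huB, hu3]
            omega
          · rw [he]
            exact Ne.symm (c'_proper hx hv w u hu)
      -- (ii) if e = 2 then some neighbor of w has cS-color 1
      have hyes : e = 2 → ∃ u, (pathGraph n).Adj w u ∧ cS x v S u = 1 := by
        intro he2
        by_cases hwB : w ∈ Bset x v
        · have hxw : x w = 1 := by
            have := c'_in hx hv hwB
            omega
          obtain ⟨u', hu'B, hadj⟩ := B_nbr hv hu0 hu03 hwB
          have hxu' : x u' ≠ 3 := mem_B_ne3 hv hu'B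
          have hne' : x w ≠ x u' := grundy_proper hx w u' hadj
          have h1' := grundy_pos hx u'
          have h2' := path_grundy_le_three hx u'
          have hxu2 : x u' = 2 := by omega
          have hu'S : u' ∉ S := fun h => hxu' ((hS h)).1
          exact ⟨u', hadj, by rw [cS_not_mem S hu'S, c'_in hx hv hu'B, hxu2]⟩
        · have hxw : x w = 2 := by
            have := c'_out hx hv hwB
            omega
          have hsfw : smallestFree (pathGraph n) x w = 2 := by rw [← hx w, hxw]
          obtain ⟨u', hadj, hcu'⟩ := sf_exists_below (pathGraph n) x w (i := 1) le_rfl (by omega)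
          have hu'B : u' ∉ Bset x v := fun h => hwB (B_closed hv h hadj.symm hw3)
          have hu'S : u' ∉ S := fun h => by have := ((hS h)).1; omega
          exact ⟨u', hadj, by rw [cS_not_mem S hu'S, c'_out hx hv hu'B, hcu']⟩
      rcases (by omega : e = 1 ∨ e = 2) with h | h
      · rw [hcw, h]
        rw [sf_eq_one _ _ _ (fun u hu => h ▸ hno u hu)]
      · rw [hcw, h]
        rw [sf_eq_two _ _ _ (hyes h) (fun u hu => h ▸ hno u hu)]


lemma cS_bad (hx : IsGrundy (pathGraph n) x) (hv : x v ≠ 3) {S : Set (Fin n)}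
    (hS : S ⊆ Tset x v) {t : Fin n} (ht : t ∈ Tset x v) (htS : t ∉ S) :
    cS x v S t = 3 ∧
      smallestFree (pathGraph n) (cS x v S) t =
        smallestFree (pathGraph n) (kempeSwap (pathGraph n) x v (3 - x v)) t ∧
      smallestFree (pathGraph n) (kempeSwap (pathGraph n) x v (3 - x v)) t ≠ 3 := by
  have ht3 := ht.1
  have htB : t ∉ Bset x v := fun h => mem_B_ne3 hv h ht3
  refine ⟨by rw [cS_not_mem S htS, c'_out hx hv htB, ht3], ?_, ?_⟩
  · apply sf_congr
    intro u hu
    have hu3 : x u ≠ 3 := fun h => grundy_proper hx t u hu (ht3.trans h.symm)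
    exact cS_not_mem S (fun h => hu3 ((hS h)).1)
  · obtain ⟨m, hm12, _, hmsf⟩ := T_struct hx hv ht
    rw [hmsf]
    omega

lemma gls_reach (hx : IsGrundy (pathGraph n) x) (hv : x v ≠ 3)
    {u0 : Fin n} (hu0 : (pathGraph n).Adj v u0) (hu03 : x u0 ≠ 3)
    {c'' : Fin n → ℕ}
    (h : Relation.ReflTransGen (glsStep (pathGraph n))
      (kempeSwap (pathGraph n) x v (3 - x v)) c'') :
    ∃ S, S ⊆ Tset x v ∧ c'' = cS x v S := by
  induction h with
  | refl =>
    refine ⟨∅, Set.empty_subset _, ?_⟩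
    funext w
    rw [cS_not_mem ∅ (Set.notMem_empty w)]
  | tail hab hstep ih =>
    obtain ⟨S, hS, rfl⟩ := ih
    obtain ⟨w, hne, hupd⟩ := hstep
    have hwTS : w ∈ Tset x v \ S := by
      by_contra hcon
      exact hne (cS_sf_off hx hv hu0 hu03 hS hcon)
    refine ⟨S ∪ {w}, Set.union_subset hS (by simp [hwTS.1]), ?_⟩
    obtain ⟨hc3, hsfeq, hsfne⟩ := cS_bad hx hv hS hwTS.1 hwTS.2
    rw [hupd]
    funext a
    by_cases haw : a = w
    · subst haw
      rw [Function.update_self]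
      rw [cS_mem _ (by simp : a ∈ S ∪ {a})]
      rw [hsfeq]
    · rw [Function.update_of_ne haw]
      by_cases haS : a ∈ S
      · rw [cS_mem _ haS, cS_mem _ (Set.mem_union_left _ haS)]
      · rw [cS_not_mem _ haS, cS_not_mem _ (by simp [haS, haw])]

lemma T_nonempty (hx : IsGrundy (pathGraph n) x) (hv : x v ≠ 3)
    {t0 : Fin n} (ht0 : x t0 = 3) : ∃ t, t ∈ Tset x v := by
  by_contra hT
  push_neg at hT
  have key : ∀ (a b : Fin n), (pathGraph n).Walk a b → a ∈ Bset x v → x b ≠ 3 ∨ False := by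
    intro a b p
    induction p with
    | nil => exact fun ha => Or.inl (mem_B_ne3 hv ha)
    | @cons a e b h q ih =>
      intro ha
      by_cases he3 : x e = 3
      · exact absurd (show e ∈ Tset x v from ⟨he3, a, h.symm, ha⟩) (hT e)
      · exact ih (B_closed hv ha h he3)
  have hpre := pathGraph_preconnected n v t0
  obtain ⟨p⟩ := hpre
  rcases key v t0 p v_mem_B with h | h
  · exact h ht0
  · exact h


lemma kempe_good (hx : IsGrundy (pathGraph n) x) (hv : x v ≠ 3)
    {u0 : Fin n} (hu0 : (pathGraph n).Adj v u0) (hu03 : x u0 ≠ 3)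
    {t0 : Fin n} (ht0 : x t0 = 3)
    {z : Fin n → ℕ} (hz : glsRun (pathGraph n) (kempeSwap (pathGraph n) x v (3 - x v)) z) :
    colorCount z 3 < colorCount x 3 := by
  obtain ⟨hreach, hzg⟩ := hz
  obtain ⟨S, hS, rfl⟩ := gls_reach hx hv hu0 hu03 hreach
  have hST : Tset x v ⊆ S := by
    intro t ht
    by_contra htS
    obtain ⟨hc3, hsfeq, hsfne⟩ := cS_bad hx hv hS ht htS
    have hg := hzg t
    exact hsfne (by rw [← hsfeq, ← hg, hc3])
  have hsf_ne3 : ∀ t ∈ Tset x v,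
      smallestFree (pathGraph n) (kempeSwap (pathGraph n) x v (3 - x v)) t ≠ 3 := by
    intro t ht
    obtain ⟨m, hm12, _, hmsf⟩ := T_struct hx hv ht
    rw [hmsf]; omega
  unfold colorCount
  apply Finset.card_lt_card
  rw [Finset.ssubset_iff_of_subset]
  · obtain ⟨t, ht⟩ := T_nonempty hx hv ht0
    refine ⟨t, by simp [ht.1], ?_⟩
    simp only [Finset.mem_filter, Finset.mem_univ, true_and]
    rw [cS_mem S (hST ht)]
    exact hsf_ne3 t ht
  · intro w hw
    simp only [Finset.mem_filter, Finset.mem_univ, true_and] at hw ⊢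
    by_cases hwS : w ∈ S
    · rw [cS_mem S hwS] at hw
      exact absurd hw (hsf_ne3 w (hS hwS))
    · rw [cS_not_mem S hwS] at hw
      by_cases hwB : w ∈ Bset x v
      · rw [c'_in hx hv hwB] at hw
        have h1 := grundy_pos hx w
        have h2 := path_grundy_le_three hx w
        have h3 := mem_B_ne3 hv hwB
        omega
      · rw [c'_out hx hv hwB] at hw
        exact hw

end kempe



/-! ### Counting good vertices -/

section counting
open SimpleGraph
variable {n : ℕ} {x : Fin n → ℕ}

def GoodV (x : Fin n → ℕ) (v : Fin n) : Prop :=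
  x v ≠ 3 ∧ ∃ u, (pathGraph n).Adj v u ∧ x u ≠ 3

/-- a 2-colored vertex has a unique 3-colored neighbor (if any) -/
lemma three_nbr_unique (hx : IsGrundy (pathGraph n) x) {y a b : Fin n} (hy2 : x y = 2)
    (ha : (pathGraph n).Adj y a) (hb : (pathGraph n).Adj y b)
    (ha3 : x a = 3) (hb3 : x b = 3) : a = b := by
  have hsf : smallestFree (pathGraph n) x y = 2 := by rw [← hx y, hy2]
  obtain ⟨u, hu, hu1⟩ := sf_exists_below (pathGraph n) x y (i := 1) le_rfl (by omega)
  rcases path_two_nbrs ha hb hu with h | h | h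
  · exact h
  · rw [h] at ha3; omega
  · rw [h] at hb3; omega

/-- a 3-colored vertex has a unique 1-colored neighbor -/
lemma one_nbr_unique (hx : IsGrundy (pathGraph n) x) {t a b : Fin n} (ht : x t = 3)
    (ha : (pathGraph n).Adj t a) (hb : (pathGraph n).Adj t b)
    (ha1 : x a = 1) (hb1 : x b = 1) : a = b := by
  obtain ⟨u1, u2, _, _, hc1, hc2, _, hall⟩ := path_three_struct hx ht
  rcases hall a ha with h | h
  · rcases hall b hb with h' | h'
    · rw [h, h']
    · rw [h'] at hb1; omega
  · rw [h] at ha1; omega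

def RelVY (x : Fin n → ℕ) (v y : Fin n) : Prop :=
  GoodV x y ∧ x y = 2 ∧
    ((x v = 3 ∧ (pathGraph n).Adj v y) ∨
      (x v = 1 ∧ ∃ t, (pathGraph n).Adj v t ∧ x t = 3 ∧ (pathGraph n).Adj t y))

lemma good2 (hx : IsGrundy (pathGraph n) x) {y : Fin n} (hy2 : x y = 2) : GoodV x y := by
  have hsf : smallestFree (pathGraph n) x y = 2 := by rw [← hx y, hy2]
  obtain ⟨u, hu, hu1⟩ := sf_exists_below (pathGraph n) x y (i := 1) le_rfl (by omega)
  exact ⟨by omega, u, hu, by omega⟩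

lemma bad_exists_rel (hn : 2 ≤ n) (hx : IsGrundy (pathGraph n) x) {v : Fin n}
    (hv : ¬ GoodV x v) : ∃ y, RelVY x v y := by
  by_cases hv3 : x v = 3
  · obtain ⟨u1, u2, ha1, ha2, hc1, hc2, _, _⟩ := path_three_struct hx hv3
    exact ⟨u2, good2 hx hc2, hc2, Or.inl ⟨hv3, ha2⟩⟩
  · have hallnbr3 : ∀ u, (pathGraph n).Adj v u → x u = 3 := by
      intro u hu
      by_contra h
      exact hv ⟨hv3, u, hu, h⟩
    obtain ⟨t, hadjt⟩ := path_exists_nbr hn v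
    have ht3 := hallnbr3 t hadjt
    have hv1 : x v = 1 := by
      have h1 := grundy_pos hx v
      have h2 := path_grundy_le_three hx v
      rcases (by omega : x v = 1 ∨ x v = 2) with h | h
      · exact h
      · exfalso
        have hsf : smallestFree (pathGraph n) x v = 2 := by rw [← hx v, h]
        obtain ⟨u, hu, hu1⟩ := sf_exists_below (pathGraph n) x v (i := 1) le_rfl (by omega)
        have := hallnbr3 u hu
        omega
    obtain ⟨u1, u2, ha1, ha2, hc1, hc2, _, _⟩ := path_three_struct hx ht3
    exact ⟨u2, good2 hx hc2, hc2, Or.inr ⟨hv1, t, hadjt, ht3, ha2⟩⟩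

lemma rel_unique3 (hx : IsGrundy (pathGraph n) x) {v v' y : Fin n}
    (h : RelVY x v y) (h' : RelVY x v' y) (hv : x v = 3) (hv' : x v' = 3) : v = v' := by
  obtain ⟨_, hy2, hcase⟩ := h
  obtain ⟨_, _, hcase'⟩ := h'
  rcases hcase with ⟨_, hadj⟩ | ⟨hv1, _⟩; swap; · exact absurd hv (by omega)
  rcases hcase' with ⟨_, hadj'⟩ | ⟨hv1', _⟩; swap; · exact absurd hv' (by omega)
  exact three_nbr_unique hx hy2 hadj.symm hadj'.symm hv hv'

lemma rel_unique1 (hx : IsGrundy (pathGraph n) x) {v v' y : Fin n}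
    (h : RelVY x v y) (h' : RelVY x v' y) (hv : x v ≠ 3) (hv' : x v' ≠ 3) : v = v' := by
  obtain ⟨_, hy2, hcase⟩ := h
  obtain ⟨_, _, hcase'⟩ := h'
  rcases hcase with ⟨h3, _⟩ | ⟨hv1, t, hat, ht3, hty⟩; · exact absurd h3 hv
  rcases hcase' with ⟨h3, _⟩ | ⟨hv1', t', hat', ht3', hty'⟩; · exact absurd h3 hv' 
  have htt : t = t' := three_nbr_unique hx hy2 hty.symm hty'.symm ht3 ht3'
  subst htt
  exact one_nbr_unique hx ht3 hat.symm hat'.symm hv1 hv1'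

lemma good_card (hn : 2 ≤ n) (hx : IsGrundy (pathGraph n) x) :
    n ≤ 3 * (Finset.univ.filter fun v => GoodV x v).card := by
  classical
  set good := Finset.univ.filter fun v => GoodV x v with hgood
  set bad := Finset.univ.filter fun v => ¬ GoodV x v with hbad
  have hsplit : good.card + bad.card = n := by
    rw [hgood, hbad, Finset.card_filter_add_card_filter_not]
    simp
  set f : Fin n → Fin n := fun v =>
    if h : ∃ y, RelVY x v y then h.choose else v with hf
  have hfrel : ∀ v ∈ bad, RelVY x v (f v) := by
    intro v hv
    rw [hbad, Finset.mem_filter] at hv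
    have h : ∃ y, RelVY x v y := bad_exists_rel hn hx hv.2
    rw [hf]
    simp only [dif_pos h]
    exact h.choose_spec
  have hmaps : ∀ v ∈ bad, f v ∈ good := by
    intro v hv
    rw [hgood, Finset.mem_filter]
    exact ⟨Finset.mem_univ _, (hfrel v hv).1⟩
  have hfiber : ∀ y ∈ good, (bad.filter fun v => f v = y).card ≤ 2 := by
    intro y _
    by_contra h
    push_neg at h
    rw [show (2 < (bad.filter fun v => f v = y).card) ↔ _ from Finset.two_lt_card] at h
    obtain ⟨a, ha, b, hb, c, hc, hab, hac, hbc⟩ := h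
    simp only [Finset.mem_filter] at ha hb hc
    have hra : RelVY x a y := ha.2 ▸ hfrel a ha.1
    have hrb : RelVY x b y := hb.2 ▸ hfrel b hb.1
    have hrc : RelVY x c y := hc.2 ▸ hfrel c hc.1
    -- pigeonhole on whether the color is 3
    by_cases h3a : x a = 3 <;> by_cases h3b : x b = 3 <;> by_cases h3c : x c = 3
    · exact hab (rel_unique3 hx hra hrb h3a h3b)
    · exact hab (rel_unique3 hx hra hrb h3a h3b)
    · exact hac (rel_unique3 hx hra hrc h3a h3c)
    · exact hbc (rel_unique1 hx hrb hrc h3b h3c)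
    · exact hbc (rel_unique3 hx hrb hrc h3b h3c)
    · exact hac (rel_unique1 hx hra hrc h3a h3c)
    · exact hab (rel_unique1 hx hra hrb h3a h3b)
    · exact hab (rel_unique1 hx hra hrb h3a h3b)
  have hcard := Finset.card_le_mul_card_image_of_maps_to hmaps 2 hfiber
  omega
end counting



/-! ### Acceptance and the preference order on Grundy colorings -/

section accept
open SimpleGraph
variable {n : ℕ}

lemma grundy_count_gt3 {c : Fin n → ℕ} (hc : IsGrundy (pathGraph n) c) {i : ℕ} (hi : 3 < i) :
    colorCount c i = 0 := by
  unfold colorCount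
  rw [Finset.card_eq_zero, Finset.filter_eq_empty_iff]
  intro v _
  have := path_grundy_le_three hc v
  omega

lemma proper_numConflicts {V : Type*} [Fintype V] [DecidableEq V] {G : SimpleGraph V}
    {c : V → ℕ} (h : IsProper G c) : numConflicts G c = 0 := by
  unfold numConflicts
  rw [show conflictSet G c = ∅ from ?_]
  · exact Set.ncard_empty _
  ext e
  simp only [conflictSet, Set.mem_setOf_eq, Set.mem_empty_iff_false, iff_false, not_and]
  intro he
  rintro ⟨u, w, rfl, hc⟩
  rw [SimpleGraph.mem_edgeSet] at he
  exact h u w he hc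

lemma accept_count3_le {x z : Fin n → ℕ} (hx : IsGrundy (pathGraph n) x)
    (hz : IsGrundy (pathGraph n) z) (hpref : Pref (pathGraph n) z x) :
    colorCount z 3 ≤ colorCount x 3 := by
  rcases hpref with h | ⟨_, h | ⟨i, hlt, hgt⟩⟩
  · rw [proper_numConflicts (grundy_proper hz), proper_numConflicts (grundy_proper hx)] at h
    omega
  · exact (h 3).le
  · rcases lt_trichotomy i 3 with hi | hi | hi
    · exact (hgt 3 hi).le
    · exact (hi ▸ hlt).le
    · rw [grundy_count_gt3 hx hi] at hlt
      omega

lemma pref_of_good {x z : Fin n → ℕ} (hx : IsGrundy (pathGraph n) x)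
    (hz : IsGrundy (pathGraph n) z) (h : colorCount z 3 < colorCount x 3) :
    Pref (pathGraph n) z x := by
  right
  refine ⟨by rw [proper_numConflicts (grundy_proper hz), proper_numConflicts (grundy_proper hx)],
    Or.inr ⟨3, h, ?_⟩⟩
  intro k hk
  rw [grundy_count_gt3 hx hk, grundy_count_gt3 hz hk]

lemma notA_iff {x : Fin n → ℕ} (hx : IsGrundy (pathGraph n) x) :
    x ∉ properTwoColorings (pathGraph n) ↔ ∃ t, x t = 3 := by
  constructor
  · intro h
    by_contra h3
    push_neg at h3
    apply h
    refine ⟨grundy_proper hx, ?_⟩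
    intro v
    have h1 := grundy_pos hx v
    have h2 := path_grundy_le_three hx v
    have := h3 v
    omega
  · rintro ⟨t, ht⟩ ⟨_, hall⟩
    rcases hall t with h | h <;> omega

lemma count3_pos {x : Fin n → ℕ} {t : Fin n} (ht : x t = 3) : 1 ≤ colorCount x 3 := by
  unfold colorCount
  rw [Nat.one_le_iff_ne_zero, ← Nat.pos_iff_ne_zero, Finset.card_pos]
  exact ⟨t, by simp [ht]⟩

lemma count3_le {x : Fin n → ℕ} : colorCount x 3 ≤ n := by
  unfold colorCount
  calc (Finset.univ.filter fun v => x v = 3).card ≤ Finset.univ.card := Finset.card_filter_le _ _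
    _ = n := by simp

end accept



/-! ### The drift bound for one iteration of ILS with Kempe chains -/

section evils
open SimpleGraph
variable {n : ℕ}

lemma deg_pos (hn : 2 ≤ n) (v : Fin n) : 0 < (pathGraph n).degree v := by
  rw [← SimpleGraph.card_neighborFinset_eq_degree, Finset.card_pos]
  obtain ⟨u, hu⟩ := path_exists_nbr hn v
  exact ⟨u, (SimpleGraph.mem_neighborFinset _ _ _).mpr hu⟩

lemma deg_le_two (v : Fin n) : (pathGraph n).degree v ≤ 2 := by
  by_contra h
  push_neg at h
  rw [← SimpleGraph.card_neighborFinset_eq_degree, Finset.two_lt_card] at h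
  obtain ⟨a, ha, b, hb, c, hc, hab, hac, hbc⟩ := h
  rw [SimpleGraph.mem_neighborFinset] at ha hb hc
  rcases path_two_nbrs ha hb hc with h | h | h
  exacts [hab h, hac h, hbc h]

lemma ils_ev_bound (hn : 2 ≤ n) (gls : (Fin n → ℕ) → (Fin n → ℕ))
    (hgls : ∀ y, glsRun (SimpleGraph.pathGraph n) y (gls y))
    {x : Fin n → ℕ} (hx : IsGrundy (pathGraph n) x)
    (hA : x ∉ properTwoColorings (pathGraph n)) :
    ev (ilsKempe (pathGraph n) gls x) (fun c => (colorCount c 3 : ℝ≥0∞)) + 9⁻¹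
      ≤ (colorCount x 3 : ℝ≥0∞) := by
  have hV : Nonempty (Fin n) := ⟨⟨0, by omega⟩⟩
  obtain ⟨t0, ht0⟩ := (notA_iff hx).mp hA
  set φ : (Fin n → ℕ) → ℝ≥0∞ := fun c => (colorCount c 3 : ℝ≥0∞) with hφ
  set K : ℝ≥0∞ := (colorCount x 3 : ℝ≥0∞) with hK
  set N : ℝ≥0∞ := (n : ℝ≥0∞) with hN
  have hN0 : N ≠ 0 := by rw [hN]; exact_mod_cast (by omega : n ≠ 0)
  have hNtop : N ≠ ⊤ := by rw [hN]; exact ENNReal.natCast_ne_top n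
  set F : Fin n → ℕ → (Fin n → ℕ) := fun v j =>
    if Pref (pathGraph n) (gls (kempeSwap (pathGraph n) x v j)) x
      then gls (kempeSwap (pathGraph n) x v j) else x with hF
  -- rewrite the expectation
  have hEeq : ev (ilsKempe (pathGraph n) gls x) φ
      = ∑ v : Fin n, N⁻¹ * ∑ j ∈ Finset.Icc 1 ((pathGraph n).degree v + 1),
          (((pathGraph n).degree v + 1 : ℕ) : ℝ≥0∞)⁻¹ * φ (F v j) := by
    unfold ilsKempe
    rw [dif_pos hV]
    rw [ev_bind, tsum_fintype]
    apply Finset.sum_congr rfl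
    intro v _
    rw [PMF.uniformOfFintype_apply, Fintype.card_fin, ← hN]
    congr 1
    have : ∀ (p : PMF ℕ) (g : ℕ → (Fin n → ℕ)), ev (p.map g) φ = ev p (fun j => φ (g j)) := by
      intro p g
      rw [ev_map]
      rfl
    rw [this _ _]
    erw [ev_uniformOfFinset]
    rw [Nat.card_Icc]
    apply Finset.sum_congr rfl
    intro j _
    rfl
  -- pointwise bounds
  have hφle : ∀ v j, φ (F v j) ≤ K := by
    intro v j
    rw [hF, hφ, hK]
    simp only []
    split_ifs with h
    · exact_mod_cast accept_count3_le hx (hgls _).2 h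
    · exact le_rfl
  have hgoodv : ∀ v, GoodV x v → φ (F v (3 - x v)) + 1 ≤ K := by
    intro v hv
    obtain ⟨hv3, u0, hu0, hu03⟩ := hv
    have hlt : colorCount (gls (kempeSwap (pathGraph n) x v (3 - x v))) 3 < colorCount x 3 :=
      kempe_good hx hv3 hu0 hu03 ht0 (hgls _)
    have hpref := pref_of_good hx (hgls _).2 hlt
    rw [hF, hφ, hK]
    simp only [if_pos hpref]
    rw [← Nat.cast_one, ← Nat.cast_add, Nat.cast_le]
    omega
  -- per-vertex averages
  set a : Fin n → ℝ≥0∞ := fun v => ∑ j ∈ Finset.Icc 1 ((pathGraph n).degree v + 1),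
      (((pathGraph n).degree v + 1 : ℕ) : ℝ≥0∞)⁻¹ * φ (F v j) with ha
  have hd0 : ∀ v : Fin n, (((pathGraph n).degree v + 1 : ℕ) : ℝ≥0∞) ≠ 0 := by
    intro v; exact_mod_cast Nat.succ_ne_zero ((SimpleGraph.pathGraph n).degree v)
  have hdtop : ∀ v : Fin n, (((pathGraph n).degree v + 1 : ℕ) : ℝ≥0∞) ≠ ⊤ :=
    fun v => ENNReal.natCast_ne_top _
  have hcard : ∀ v : Fin n, (Finset.Icc 1 ((pathGraph n).degree v + 1)).card
      = (pathGraph n).degree v + 1 := by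
    intro v; rw [Nat.card_Icc]; omega
  have h_a_le : ∀ v, a v ≤ K := by
    intro v
    rw [ha]
    simp only []
    rw [← Finset.mul_sum]
    calc (((pathGraph n).degree v + 1 : ℕ) : ℝ≥0∞)⁻¹
          * ∑ j ∈ Finset.Icc 1 ((pathGraph n).degree v + 1), φ (F v j)
        ≤ (((pathGraph n).degree v + 1 : ℕ) : ℝ≥0∞)⁻¹
          * ((((pathGraph n).degree v + 1 : ℕ) : ℝ≥0∞) * K) := by
          apply mul_le_mul_right
          calc ∑ j ∈ Finset.Icc 1 ((pathGraph n).degree v + 1), φ (F v j)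
              ≤ (Finset.Icc 1 ((pathGraph n).degree v + 1)).card • K :=
                Finset.sum_le_card_nsmul _ _ K (fun j _ => hφle v j)
            _ = (((pathGraph n).degree v + 1 : ℕ) : ℝ≥0∞) * K := by
                rw [hcard, nsmul_eq_mul]
      _ = K := by rw [← mul_assoc, ENNReal.inv_mul_cancel (hd0 v) (hdtop v), one_mul]
  have h_a_good : ∀ v, GoodV x v → a v + 3⁻¹ ≤ K := by
    intro v hv
    have hdeg1 : 1 ≤ (pathGraph n).degree v := deg_pos hn v
    have hdeg2 : (pathGraph n).degree v ≤ 2 := deg_le_two v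
    have hxv1 : 1 ≤ x v := grundy_pos hx v
    have hxv3 : x v ≤ 3 := path_grundy_le_three hx v
    have hjmem : 3 - x v ∈ Finset.Icc 1 ((pathGraph n).degree v + 1) := by
      rw [Finset.mem_Icc]
      have := hv.1
      omega
    have hinv3 : (3 : ℝ≥0∞)⁻¹ ≤ (((pathGraph n).degree v + 1 : ℕ) : ℝ≥0∞)⁻¹ := by
      apply ENNReal.inv_le_inv.mpr
      exact_mod_cast (by omega : (pathGraph n).degree v + 1 ≤ 3)
    calc a v + 3⁻¹ ≤ a v + (((pathGraph n).degree v + 1 : ℕ) : ℝ≥0∞)⁻¹ :=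
          add_le_add_right hinv3 _
      _ = (((pathGraph n).degree v + 1 : ℕ) : ℝ≥0∞)⁻¹
          * ((∑ j ∈ Finset.Icc 1 ((pathGraph n).degree v + 1), φ (F v j)) + 1) := by
          rw [ha]
          simp only []
          rw [← Finset.mul_sum, mul_add, mul_one]
      _ ≤ (((pathGraph n).degree v + 1 : ℕ) : ℝ≥0∞)⁻¹
          * ((((pathGraph n).degree v + 1 : ℕ) : ℝ≥0∞) * K) := by
          apply mul_le_mul_right
          rw [← Finset.add_sum_erase _ _ hjmem]
          calc φ (F v (3 - x v))
                + ∑ j ∈ (Finset.Icc 1 ((pathGraph n).degree v + 1)).erase (3 - x v), φ (F v j)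
                + 1
              = φ (F v (3 - x v)) + 1
                + ∑ j ∈ (Finset.Icc 1 ((pathGraph n).degree v + 1)).erase (3 - x v), φ (F v j) := by
                ring
            _ ≤ K + ((Finset.Icc 1 ((pathGraph n).degree v + 1)).erase (3 - x v)).card • K := by
                exact add_le_add (hgoodv v hv)
                  (Finset.sum_le_card_nsmul _ _ K (fun j _ => hφle v j))
            _ = K + ((pathGraph n).degree v : ℝ≥0∞) * K := by
                rw [Finset.card_erase_of_mem hjmem, hcard, nsmul_eq_mul]
                norm_num
            _ = (((pathGraph n).degree v + 1 : ℕ) : ℝ≥0∞) * K := by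
                push_cast
                ring
      _ = K := by rw [← mul_assoc, ENNReal.inv_mul_cancel (hd0 v) (hdtop v), one_mul]
  -- assemble
  set gd : Finset (Fin n) := Finset.univ.filter (fun v => GoodV x v) with hgd
  have hkey : (9 : ℝ≥0∞)⁻¹ ≤ (gd.card : ℝ≥0∞) * (N⁻¹ * 3⁻¹) := by
    have hng : N ≤ 3 * (gd.card : ℝ≥0∞) := by
      rw [hN]
      exact_mod_cast good_card hn hx
    have h1 : (3 : ℝ≥0∞)⁻¹ * N ≤ (gd.card : ℝ≥0∞) := by
      calc (3 : ℝ≥0∞)⁻¹ * N ≤ 3⁻¹ * (3 * (gd.card : ℝ≥0∞)) := mul_le_mul_right hng _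
        _ = (gd.card : ℝ≥0∞) := by
          rw [← mul_assoc, ENNReal.inv_mul_cancel (by norm_num) (by norm_num), one_mul]
    have h2 : (3 : ℝ≥0∞)⁻¹ ≤ (gd.card : ℝ≥0∞) * N⁻¹ := by
      calc (3 : ℝ≥0∞)⁻¹ = 3⁻¹ * N * N⁻¹ := by
            rw [mul_assoc, ENNReal.mul_inv_cancel hN0 hNtop, mul_one]
        _ ≤ (gd.card : ℝ≥0∞) * N⁻¹ := mul_le_mul_left h1 _
    calc (9 : ℝ≥0∞)⁻¹ = 3⁻¹ * 3⁻¹ := by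
          rw [← ENNReal.mul_inv (by norm_num) (by norm_num)]
          norm_num
      _ ≤ (gd.card : ℝ≥0∞) * N⁻¹ * 3⁻¹ := mul_le_mul_left h2 _
      _ = (gd.card : ℝ≥0∞) * (N⁻¹ * 3⁻¹) := by rw [mul_assoc]
  rw [hEeq]
  have hsplit : (∑ v : Fin n, N⁻¹ * a v)
      = ∑ v ∈ gd, N⁻¹ * a v + ∑ v ∈ Finset.univ.filter (fun v => ¬ GoodV x v), N⁻¹ * a v := by
    rw [hgd, Finset.sum_filter_add_sum_filter_not]
  calc (∑ v : Fin n, N⁻¹ * a v) + 9⁻¹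
      ≤ (∑ v : Fin n, N⁻¹ * a v) + (gd.card : ℝ≥0∞) * (N⁻¹ * 3⁻¹) :=
        add_le_add_right hkey _
    _ = ∑ v ∈ gd, (N⁻¹ * a v + N⁻¹ * 3⁻¹)
        + ∑ v ∈ Finset.univ.filter (fun v => ¬ GoodV x v), N⁻¹ * a v := by
        rw [hsplit, Finset.sum_add_distrib, Finset.sum_const, nsmul_eq_mul]
        ring
    _ ≤ ∑ v ∈ gd, N⁻¹ * K
        + ∑ v ∈ Finset.univ.filter (fun v => ¬ GoodV x v), N⁻¹ * K := by
        apply add_le_add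
        · apply Finset.sum_le_sum
          intro v hv
          rw [← mul_add]
          apply mul_le_mul_right
          exact h_a_good v (by rw [hgd] at hv; exact (Finset.mem_filter.mp hv).2)
        · apply Finset.sum_le_sum
          intro v _
          exact mul_le_mul_right (h_a_le v) _
    _ = ∑ v : Fin n, N⁻¹ * K := by
        rw [hgd, Finset.sum_filter_add_sum_filter_not]
    _ = K := by
        rw [Finset.sum_const, Finset.card_univ, Fintype.card_fin, nsmul_eq_mul,
          ← mul_assoc, ← hN, ENNReal.mul_inv_cancel hN0 hNtop, one_mul]

end evils



section final
open SimpleGraph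
variable {n : ℕ}

lemma ils_support_grundy (gls : (Fin n → ℕ) → (Fin n → ℕ))
    (hgls : ∀ y, glsRun (SimpleGraph.pathGraph n) y (gls y))
    {x : Fin n → ℕ} (hx : IsGrundy (pathGraph n) x)
    {s' : Fin n → ℕ} (h : ilsKempe (pathGraph n) gls x s' ≠ 0) :
    IsGrundy (pathGraph n) s' := by
  unfold ilsKempe at h
  split_ifs at h with hV
  · have hsupp := (PMF.mem_support_iff _ s').mpr h
    rw [PMF.support_bind] at hsupp
    simp only [Set.mem_iUnion] at hsupp
    obtain ⟨v, _, hmem⟩ := hsupp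
    rw [PMF.support_map] at hmem
    obtain ⟨j, _, hj⟩ := hmem
    simp only at hj
    rw [← hj]
    split_ifs
    · exact (hgls _).2
    · exact hx
  · have hsupp := (PMF.mem_support_iff _ s').mpr h
    rw [PMF.support_pure] at hsupp
    rw [hsupp]
    exact hx

end final


/-- There is a constant `C > 0` such that for every `n ≥ 2` and every
initial Grundy coloring of the path graph on `n` vertices, the expected number of iterations
of ILS with Kempe chains (for every rule `gls` used to perform the runs of Grundy local
search) until the current coloring is a proper 2-coloring is at most `C·n`. -/
theorem stmt2 :
    ∃ C : ℝ≥0∞, 0 < C ∧ C ≠ ⊤ ∧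
      ∀ (n : ℕ) (hn : 2 ≤ n)
        (gls : (Fin n → ℕ) → (Fin n → ℕ))
        (hgls : ∀ y, glsRun (SimpleGraph.pathGraph n) y (gls y))
        (x0 : Fin n → ℕ) (hx0 : IsGrundy (SimpleGraph.pathGraph n) x0),
        expectedHitting (ilsKempe (SimpleGraph.pathGraph n) gls)
            (properTwoColorings (SimpleGraph.pathGraph n)) x0 ≤ C * (n : ℝ≥0∞) := by
  refine ⟨9, by norm_num, by norm_num, ?_⟩
  intro n hn gls hgls x0 hx0
  have hd := drift (ilsKempe (SimpleGraph.pathGraph n) gls)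
    (properTwoColorings (SimpleGraph.pathGraph n))
    {c | IsGrundy (SimpleGraph.pathGraph n) c}
    (fun s hs s' h => ils_support_grundy gls hgls hs h)
    (fun c => (colorCount c 3 : ℝ≥0∞)) 9⁻¹ (by norm_num) (by norm_num)
    (fun s hs hA => ils_ev_bound hn gls hgls hs hA) hx0
  calc expectedHitting (ilsKempe (SimpleGraph.pathGraph n) gls)
        (properTwoColorings (SimpleGraph.pathGraph n)) x0
      ≤ (colorCount x0 3 : ℝ≥0∞) / 9⁻¹ := hd
    _ = (colorCount x0 3 : ℝ≥0∞) * 9 := by rw [div_eq_mul_inv, inv_inv]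
    _ ≤ (n : ℝ≥0∞) * 9 := by
        apply mul_le_mul_left
        exact_mod_cast (count3_le : colorCount x0 3 ≤ n)
    _ = 9 * (n : ℝ≥0∞) := mul_comm _ _
end DGC
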